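/- arXiv:1202.3254 — 7 statements merged into one kernel-verified Lean document; each statement's English description precedes it below -/
import Mathlib

section
/- For every execution index k with 1 ≤ k ≤ N, define g(k) = min over services j = 1,…,m of (max over providers i ∈ P_j of avl i k). Then g(k) is exactly the maximum coverage length from k: (i) if g(k) ≥ 1 there exists a service composition solution valid on executions k,…,k+g(k)−1 (namely, the solution that assigns to each service j a provider in P_j maximizing avl i k), and (ii) no service composition solution is valid on executions k,…,k+q−1 for any q > g(k). -/
/-- A service composition solution: assigns to each service `j ∈ {1,…,m}` a
provider `f j` in the set `P j` of providers that can provide service `j`. -/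
def IsSolution (m : ℕ) (P : ℕ → Finset ℕ) (f : ℕ → ℕ) : Prop :=
  ∀ j, 1 ≤ j → j ≤ m → f j ∈ P j

/-- The solution `f` is valid on executions `k,…,k+q−1` (with `q ≥ 1` and
`k+q−1 ≤ N`): each assigned provider is active at all these executions. -/
def ValidOn (N m : ℕ) (x : ℕ → ℕ → Bool) (f : ℕ → ℕ) (k q : ℕ) : Prop :=
  1 ≤ q ∧ k + q ≤ N + 1 ∧
    ∀ j, 1 ≤ j → j ≤ m → ∀ t, k ≤ t → t < k + q → x (f j) t = true

/-- `avl N x i k` : the largest `q ≥ 0` with `k + q − 1 ≤ N` such that provider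
`i` is active at all executions `k,…,k+q−1`. -/
def avl (N : ℕ) (x : ℕ → ℕ → Bool) (i k : ℕ) : ℕ :=
  Nat.findGreatest
    (fun q => k + q ≤ N + 1 ∧ ∀ t ∈ Finset.Ico k (k + q), x i t = true)
    (N + 1 - k)

/-- `gfun N m P x k` : the minimum over services `j = 1,…,m` of the maximum
over providers `i ∈ P j` of `avl i k`. -/
noncomputable def gfun (N m : ℕ) (P : ℕ → Finset ℕ) (x : ℕ → ℕ → Bool) (k : ℕ) : ℕ :=
  sInf {a : ℕ | ∃ j, 1 ≤ j ∧ j ≤ m ∧ a = (P j).sup (fun i => avl N x i k)}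

/-- Greedy breakpoints (0-indexed): `greedyL g 0 = 1` is the paper's `l₁`, and
`greedyL g h = l_{h+1} = l_h + g(l_h)`. -/
def greedyL (g : ℕ → ℕ) : ℕ → ℕ
  | 0 => 1
  | h + 1 => greedyL g h + g (greedyL g h)

/-- A feasible schedule with `Y'` solutions: breakpoints
`1 = l' 1 < l' 2 < ⋯ < l' Y' ≤ N` such that each block `l' h,…,l' (h+1) − 1`
admits a valid service composition solution, and some solution is valid on the
final block `l' Y',…,N`. -/
def FeasibleSchedule (N m : ℕ) (P : ℕ → Finset ℕ) (x : ℕ → ℕ → Bool)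
    (Y' : ℕ) (l' : ℕ → ℕ) : Prop :=
  1 ≤ Y' ∧ l' 1 = 1 ∧
  (∀ h, 1 ≤ h → h + 1 ≤ Y' → l' h < l' (h + 1)) ∧
  l' Y' ≤ N ∧
  (∀ h, 1 ≤ h → h + 1 ≤ Y' →
    ∃ f, IsSolution m P f ∧ ValidOn N m x f (l' h) (l' (h + 1) - l' h)) ∧
  (∃ f, IsSolution m P f ∧ ValidOn N m x f (l' Y') (N + 1 - l' Y'))


lemma avl_spec (N : ℕ) (x : ℕ → ℕ → Bool) (i k : ℕ) (hk : k ≤ N + 1) :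
    k + avl N x i k ≤ N + 1 ∧ ∀ t ∈ Finset.Ico k (k + avl N x i k), x i t = true := by
  unfold avl
  exact Nat.findGreatest_spec
    (P := fun q => k + q ≤ N + 1 ∧ ∀ t ∈ Finset.Ico k (k + q), x i t = true)
    (Nat.zero_le _) ⟨by omega, by simp⟩

lemma le_avl (N : ℕ) (x : ℕ → ℕ → Bool) (i k q : ℕ)
    (h1 : k + q ≤ N + 1) (h2 : ∀ t ∈ Finset.Ico k (k + q), x i t = true) :
    q ≤ avl N x i k :=
  Nat.le_findGreatest
    (P := fun q => k + q ≤ N + 1 ∧ ∀ t ∈ Finset.Ico k (k + q), x i t = true)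
    (by omega) ⟨h1, h2⟩

/-- For every execution `k` with `1 ≤ k ≤ N`,
`g(k) = min_j max_{i ∈ P j} avl i k` is exactly the maximum coverage length
from `k`: (i) if `g(k) ≥ 1` there is a service composition solution — namely
one assigning to each service `j` a provider of `P j` maximizing `avl · k` —
valid on executions `k,…,k+g(k)−1`; (ii) no service composition solution is
valid on executions `k,…,k+q−1` for any `q > g(k)`. -/
theorem statement0 (N m n : ℕ) (P : ℕ → Finset ℕ) (x : ℕ → ℕ → Bool)
    (hm : 1 ≤ m)
    (hP : ∀ j, 1 ≤ j → j ≤ m → (P j).Nonempty)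
    (hPn : ∀ j, 1 ≤ j → j ≤ m → ∀ i ∈ P j, 1 ≤ i ∧ i ≤ n)
    (k : ℕ) (hk1 : 1 ≤ k) (hkN : k ≤ N) :
    (1 ≤ gfun N m P x k →
      ∃ f : ℕ → ℕ, IsSolution m P f ∧
        (∀ j, 1 ≤ j → j ≤ m → ∀ i ∈ P j, avl N x i k ≤ avl N x (f j) k) ∧
        ValidOn N m x f k (gfun N m P x k)) ∧
    (∀ q, gfun N m P x k < q →
      ∀ f : ℕ → ℕ, IsSolution m P f → ¬ ValidOn N m x f k q) := by
  set S : Set ℕ := {a : ℕ | ∃ j, 1 ≤ j ∧ j ≤ m ∧ a = (P j).sup (fun i => avl N x i k)} with hS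
  have hSne : S.Nonempty := ⟨(P 1).sup (fun i => avl N x i k), 1, le_refl 1, hm, rfl⟩
  have hginS : gfun N m P x k ∈ S := Nat.sInf_mem hSne
  have hgle : ∀ j, 1 ≤ j → j ≤ m → gfun N m P x k ≤ (P j).sup (fun i => avl N x i k) := by
    intro j h1 h2
    exact Nat.sInf_le ⟨j, h1, h2, rfl⟩
  constructor
  · intro hg1
    classical
    have hex : ∀ j, 1 ≤ j → j ≤ m → ∃ i ∈ P j, (P j).sup (fun i => avl N x i k) = avl N x i k :=
      fun j h1 h2 => Finset.exists_mem_eq_sup _ (hP j h1 h2) _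
    refine ⟨fun j => if h : 1 ≤ j ∧ j ≤ m then (hex j h.1 h.2).choose else 0, ?_, ?_, ?_⟩
    · intro j h1 h2
      simp only [dif_pos (And.intro h1 h2)]
      exact (hex j h1 h2).choose_spec.1
    · intro j h1 h2 i hi
      simp only [dif_pos (And.intro h1 h2)]
      rw [← (hex j h1 h2).choose_spec.2]
      exact Finset.le_sup (f := fun i => avl N x i k) hi
    · refine ⟨hg1, ?_, ?_⟩
      · obtain ⟨j, h1, h2, heq⟩ := hginS
        obtain ⟨i, hi, hsup⟩ := hex j h1 h2
        have := (avl_spec N x i k (by omega)).1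
        omega
      · intro j h1 h2 t ht1 ht2
        simp only [dif_pos (And.intro h1 h2)]
        set i := (hex j h1 h2).choose with hidef
        have hsup : (P j).sup (fun i => avl N x i k) = avl N x i k := (hex j h1 h2).choose_spec.2
        have hga : gfun N m P x k ≤ avl N x i k := hsup ▸ hgle j h1 h2
        exact (avl_spec N x i k (by omega)).2 t (Finset.mem_Ico.mpr ⟨ht1, by omega⟩)
  · intro q hq f hf hv
    obtain ⟨hq1, hqN, hact⟩ := hv
    obtain ⟨j, h1, h2, heq⟩ := hginS
    have hle : q ≤ avl N x (f j) k := by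
      apply le_avl N x (f j) k q hqN
      intro t ht
      rw [Finset.mem_Ico] at ht
      exact hact j h1 h2 t ht.1 ht.2
    have : avl N x (f j) k ≤ (P j).sup (fun i => avl N x i k) := Finset.le_sup (f := fun i => avl N x i k) (hf j h1 h2)
    omega
end

section
/- Let g(k) = min over services j of (max over providers i ∈ P_j of avl i k). If some service composition solution is valid on executions k',…,k'+q'−1 (with q' ≥ 1 and k'+q'−1 ≤ N) and k is any execution with k' ≤ k ≤ k'+q'−1, then k + g(k) ≥ k' + q'. In particular, the greedy reach from any execution inside a validity interval extends at least to the end of that interval. -/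
/-- If some service composition solution `f` is valid on
executions `k',…,k'+q'−1` (with `q' ≥ 1` and `k'+q'−1 ≤ N`, both encoded in
`ValidOn`) and `k' ≤ k ≤ k'+q'−1`, then `k + g(k) ≥ k' + q'` where
`g(k) = min_j max_{i ∈ P j} avl i k`: the greedy reach from any execution
inside a validity interval extends at least to the end of that interval. -/
theorem statement2 (N m n : ℕ) (P : ℕ → Finset ℕ) (x : ℕ → ℕ → Bool)
    (hm : 1 ≤ m)
    (hP : ∀ j, 1 ≤ j → j ≤ m → (P j).Nonempty)
    (hPn : ∀ j, 1 ≤ j → j ≤ m → ∀ i ∈ P j, 1 ≤ i ∧ i ≤ n)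
    (f : ℕ → ℕ) (k' q' : ℕ)
    (hf : IsSolution m P f) (hval : ValidOn N m x f k' q')
    (k : ℕ) (hk1 : k' ≤ k) (hk2 : k ≤ k' + q' - 1) :
    k' + q' ≤ k + gfun N m P x k := by
  obtain ⟨hq1, hqN, hact⟩ := hval
  have hk2' : k < k' + q' := by omega
  -- every element of the set is ≥ k' + q' - k
  have key : ∀ a ∈ {a : ℕ | ∃ j, 1 ≤ j ∧ j ≤ m ∧ a = (P j).sup (fun i => avl N x i k)},
      k' + q' - k ≤ a := by
    rintro a ⟨j, hj1, hj2, rfl⟩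
    have hfj : f j ∈ P j := hf j hj1 hj2
    have havl : k' + q' - k ≤ avl N x (f j) k := by
      apply Nat.le_findGreatest
      · omega
      · constructor
        · omega
        · intro t ht
          rw [Finset.mem_Ico] at ht
          exact hact j hj1 hj2 t (by omega) (by omega)
    exact le_trans havl (Finset.le_sup (f := fun i => avl N x i k) hfj)
  have hne : (gfun N m P x k) ∈ {a : ℕ | ∃ j, 1 ≤ j ∧ j ≤ m ∧ a = (P j).sup (fun i => avl N x i k)} := by
    apply Nat.sInf_mem
    exact ⟨_, 1, le_refl 1, hm, rfl⟩
  have := key _ hne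
  omega
end

section
/- (Lemma 1) Assume for every execution k and every service j some provider in P_j is active at k. Let l_1 < l_2 < ⋯ < l_Y be the greedy breakpoints (l_1 = 1 and l_{h+1} = l_h + g(l_h), where g(k) = min over services j of max over providers i ∈ P_j of avl i k), and let 1 = l'_1 < l'_2 < ⋯ < l'_{Y'} be the breakpoints of any feasible schedule. Then for every index b with 1 ≤ b ≤ min(Y, Y'), one has l_b ≥ l'_b. -/
/-- **Lemma 1.** Assume every service has an active provider at
every execution. Let `l₁ < l₂ < ⋯ < l_Y` be the greedy breakpoints
(`l_b = greedyL g (b-1)`, with `l_Y ≤ N < l_{Y+1}`), and let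
`1 = l'₁ < l'₂ < ⋯ < l'_{Y'}` be the breakpoints of any feasible schedule.
Then `l_b ≥ l'_b` for every `b` with `1 ≤ b ≤ min(Y, Y')`. -/
theorem statement3 (N m n : ℕ) (P : ℕ → Finset ℕ) (x : ℕ → ℕ → Bool)
    (hm : 1 ≤ m) (hN : 1 ≤ N)
    (hP : ∀ j, 1 ≤ j → j ≤ m → (P j).Nonempty)
    (hPn : ∀ j, 1 ≤ j → j ≤ m → ∀ i ∈ P j, 1 ≤ i ∧ i ≤ n)
    (hact : ∀ k, 1 ≤ k → k ≤ N → ∀ j, 1 ≤ j → j ≤ m → ∃ i ∈ P j, x i k = true)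
    (Y : ℕ) (hY1 : 1 ≤ Y)
    (hYle : greedyL (gfun N m P x) (Y - 1) ≤ N)
    (hYgt : N < greedyL (gfun N m P x) Y)
    (Y' : ℕ) (l' : ℕ → ℕ) (hsched : FeasibleSchedule N m P x Y' l') :
    ∀ b, 1 ≤ b → b ≤ Y → b ≤ Y' → l' b ≤ greedyL (gfun N m P x) (b - 1) := by
  obtain ⟨hY'1, hl'1, hmono, hlast, hblocks, hfinal⟩ := hsched
  intro b hb
  induction b, hb using Nat.le_induction with
  | base =>
    intro _ _
    simp [hl'1, greedyL]
  | succ b hb ih =>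
    intro hbY hbY'
    have ihb := ih (by omega) (by omega)
    set g := gfun N m P x with hg
    set L := greedyL g (b - 1) with hL
    have hgreedy : greedyL g (b + 1 - 1) = L + g L := by
      obtain ⟨b', rfl⟩ : ∃ b', b = b' + 1 := ⟨b - 1, by omega⟩
      simp only [hL, Nat.add_sub_cancel]
      rfl
    rw [hgreedy]
    by_cases hcase : l' (b + 1) ≤ L
    · omega
    push_neg at hcase
    obtain ⟨f, hsol, hq1, hqN, hval⟩ := hblocks b (by omega) hbY'
    have hlt : l' b < l' (b + 1) := hmono b (by omega) hbY'
    have hl'N : l' (b + 1) ≤ N + 1 := by omega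
    set c := l' (b + 1) - L with hc
    have hcge : c ≤ g L := by
      rw [hg, gfun]
      have hne : {a : ℕ | ∃ j, 1 ≤ j ∧ j ≤ m ∧ a = (P j).sup (fun i => avl N x i L)}.Nonempty :=
        ⟨(P 1).sup (fun i => avl N x i L), 1, le_refl 1, hm, rfl⟩
      apply le_csInf hne
      rintro a ⟨j, hj1, hjm, rfl⟩
      have hfj := hsol j hj1 hjm
      have havl : c ≤ avl N x (f j) L := by
        apply Nat.le_findGreatest (by omega)
        refine ⟨by omega, ?_⟩
        intro t ht
        rw [Finset.mem_Ico] at ht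
        exact hval j hj1 hjm t (by omega) (by omega)
      exact le_trans havl (Finset.le_sup (f := fun i => avl N x i L) hfj)
    omega
end

section
/- (Theorem 1, optimality of the greedy algorithm) Assume for every execution k and every service j some provider in P_j is active at k. Let Y be the number of greedy breakpoints (l_1 = 1 and l_{h+1} = l_h + g(l_h) with g(k) = min over services j of max over providers i ∈ P_j of avl i k, iterated until the breakpoints exceed N). Then for every feasible schedule with Y' solutions, Y ≤ Y'; that is, the greedy algorithm uses the minimum possible number of service composition solutions during the persistent query's lifetime. -/
lemma validOn_restrict (N m : ℕ) (x : ℕ → ℕ → Bool) (f : ℕ → ℕ) (k' q' k : ℕ)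
    (hv : ValidOn N m x f k' q') (h1 : k' ≤ k) (h2 : k < k' + q') :
    ValidOn N m x f k (k' + q' - k) := by
  obtain ⟨hq1, hkq, hv⟩ := hv
  exact ⟨by omega, by omega, fun j hj1 hjm t ht1 ht2 => hv j hj1 hjm t (by omega) (by omega)⟩

lemma validOn_le_gfun (N m : ℕ) (P : ℕ → Finset ℕ) (x : ℕ → ℕ → Bool)
    (f : ℕ → ℕ) (k q : ℕ) (hm : 1 ≤ m) (hf : IsSolution m P f)
    (hv : ValidOn N m x f k q) : q ≤ gfun N m P x k := by
  obtain ⟨hq1, hkq, hv⟩ := hv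
  unfold gfun
  refine le_csInf ⟨(P 1).sup (fun i => avl N x i k), 1, le_refl 1, hm, rfl⟩ ?_
  rintro a ⟨j, hj1, hjm, rfl⟩
  have h1 : q ≤ avl N x (f j) k := by
    unfold avl
    refine Nat.le_findGreatest (by omega) ?_
    exact ⟨hkq, fun t ht => by
      rw [Finset.mem_Ico] at ht; exact hv j hj1 hjm t ht.1 ht.2⟩
  exact h1.trans (Finset.le_sup (f := fun i => avl N x i k) (hf j hj1 hjm))

lemma one_le_gfun (N m : ℕ) (P : ℕ → Finset ℕ) (x : ℕ → ℕ → Bool)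
    (hm : 1 ≤ m)
    (hact : ∀ k, 1 ≤ k → k ≤ N → ∀ j, 1 ≤ j → j ≤ m → ∃ i ∈ P j, x i k = true)
    (k : ℕ) (hk1 : 1 ≤ k) (hkN : k ≤ N) : 1 ≤ gfun N m P x k := by
  unfold gfun
  refine le_csInf ⟨(P 1).sup (fun i => avl N x i k), 1, le_refl 1, hm, rfl⟩ ?_
  rintro a ⟨j, hj1, hjm, rfl⟩
  obtain ⟨i, hiP, hix⟩ := hact k hk1 hkN j hj1 hjm
  have h1 : 1 ≤ avl N x i k := by
    unfold avl
    refine Nat.le_findGreatest (by omega) ?_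
    refine ⟨by omega, fun t ht => ?_⟩
    rw [Finset.mem_Ico] at ht
    have : t = k := by omega
    rwa [this]
  exact h1.trans (Finset.le_sup (f := fun i => avl N x i k) hiP)

lemma greedyL_mono (g : ℕ → ℕ) : Monotone (greedyL g) :=
  monotone_nat_of_le_succ fun h => Nat.le_add_right _ _

/-- **Theorem 1, optimality of the greedy algorithm.** Assume
every service has an active provider at every execution. Let `Y` be the number
of greedy breakpoints (`l₁ = 1`, `l_{h+1} = l_h + g(l_h)`, iterated until the
breakpoints exceed `N`, i.e. `l_Y ≤ N < l_{Y+1}`). Then every feasible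
schedule uses at least `Y` solutions: `Y ≤ Y'`. -/
theorem statement4 (N m n : ℕ) (P : ℕ → Finset ℕ) (x : ℕ → ℕ → Bool)
    (hm : 1 ≤ m) (hN : 1 ≤ N)
    (hP : ∀ j, 1 ≤ j → j ≤ m → (P j).Nonempty)
    (hPn : ∀ j, 1 ≤ j → j ≤ m → ∀ i ∈ P j, 1 ≤ i ∧ i ≤ n)
    (hact : ∀ k, 1 ≤ k → k ≤ N → ∀ j, 1 ≤ j → j ≤ m → ∃ i ∈ P j, x i k = true)
    (Y : ℕ) (hY1 : 1 ≤ Y)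
    (hYle : greedyL (gfun N m P x) (Y - 1) ≤ N)
    (hYgt : N < greedyL (gfun N m P x) Y) :
    ∀ (Y' : ℕ) (l' : ℕ → ℕ), FeasibleSchedule N m P x Y' l' → Y ≤ Y' := by
  intro Y' l' hfs
  obtain ⟨hY'1, hl'1, hinc, hlN, hblocks, fl, hfl_sol, hfl_valid⟩ := hfs
  by_contra hcon
  push_neg at hcon
  set g := gfun N m P x with hg
  -- greedy breakpoints dominate any feasible schedule's breakpoints
  have key : ∀ h, 1 ≤ h → h ≤ Y' → l' h ≤ greedyL g (h - 1) := by
    intro h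
    induction h with
    | zero => omega
    | succ h ih =>
      intro _ hhY'
      rcases Nat.eq_zero_or_pos h with h0 | h1
      · subst h0; simp [greedyL, hl'1]
      · have ihh := ih h1 (by omega)
        obtain ⟨f, hfsol, hfval⟩ := hblocks h h1 hhY'
        have hlt := hinc h h1 hhY'
        set L := greedyL g (h - 1) with hL
        have hstep : greedyL g (h + 1 - 1) = L + g L := by
          have : h + 1 - 1 = (h - 1) + 1 := by omega
          rw [this]; rfl
        rw [hstep]
        by_cases hc : l' (h + 1) ≤ L
        · omega
        · push_neg at hc
          have hsum : l' h + (l' (h + 1) - l' h) = l' (h + 1) := by omega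
          have hres := validOn_restrict N m x f (l' h) (l' (h + 1) - l' h) L hfval ihh
            (by omega)
          rw [hsum] at hres
          have hq := validOn_le_gfun N m P x f L (l' (h + 1) - L) hm hfsol hres
          rw [← hg] at hq
          omega
  -- the last greedy breakpoint considered is within range
  have hY'Y : Y' ≤ Y - 1 := by omega
  have hLle : greedyL g (Y' - 1) ≤ N :=
    le_trans (greedyL_mono g (by omega)) hYle
  have hl'L := key Y' hY'1 le_rfl
  set L := greedyL g (Y' - 1) with hL
  -- restrict the last block's solution to start at L
  have hsum : l' Y' + (N + 1 - l' Y') = N + 1 := by omega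
  have hres := validOn_restrict N m x fl (l' Y') (N + 1 - l' Y') L hfl_valid hl'L
    (by omega)
  rw [hsum] at hres
  have hgL := validOn_le_gfun N m P x fl L (N + 1 - L) hm hfl_sol hres
  rw [← hg] at hgL
  have hbig : N + 1 ≤ greedyL g Y' := by
    have : Y' = (Y' - 1) + 1 := by omega
    rw [this]
    show N + 1 ≤ L + g L
    omega
  have hsmall : greedyL g Y' ≤ N := le_trans (greedyL_mono g hY'Y) hYle
  omega
end

section
/- For any feasible schedule with breakpoints 1 = l'_1 < l'_2 < ⋯ < l'_{Y'} ≤ N, every block length is bounded by the greedy reach at its start: for each h < Y', l'_{h+1} − l'_h ≤ g(l'_h), and also N + 1 − l'_{Y'} ≤ g(l'_{Y'}), where g(k) = min over services j of (max over providers i ∈ P_j of avl i k). -/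
lemma valid_le_gfun (N m : ℕ) (P : ℕ → Finset ℕ) (x : ℕ → ℕ → Bool)
    (hm : 1 ≤ m) {f : ℕ → ℕ} {k q : ℕ}
    (hf : IsSolution m P f) (hv : ValidOn N m x f k q) :
    q ≤ gfun N m P x k := by
  obtain ⟨hq1, hkq, hact⟩ := hv
  apply le_csInf ⟨_, Set.mem_setOf.mpr ⟨1, le_refl 1, hm, rfl⟩⟩
  rintro b ⟨j, hj1, hjm, rfl⟩
  have hmem := hf j hj1 hjm
  refine le_trans ?_ (Finset.le_sup hmem)
  apply Nat.le_findGreatest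
  · have : k ≤ N + 1 := le_trans (Nat.le_add_right _ _) hkq
    omega
  · exact ⟨hkq, fun t ht => by
      rw [Finset.mem_Ico] at ht; exact hact j hj1 hjm t ht.1 ht.2⟩

/-- For any feasible schedule with breakpoints
`1 = l'₁ < l'₂ < ⋯ < l'_{Y'} ≤ N`, every block length is bounded by the greedy
reach at its start: `l'_{h+1} − l'_h ≤ g(l'_h)` for each `h < Y'`, and
`N + 1 − l'_{Y'} ≤ g(l'_{Y'})`, where
`g(k) = min_j max_{i ∈ P j} avl i k`. -/
theorem statement5 (N m n : ℕ) (P : ℕ → Finset ℕ) (x : ℕ → ℕ → Bool)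
    (hm : 1 ≤ m)
    (hP : ∀ j, 1 ≤ j → j ≤ m → (P j).Nonempty)
    (hPn : ∀ j, 1 ≤ j → j ≤ m → ∀ i ∈ P j, 1 ≤ i ∧ i ≤ n)
    (Y' : ℕ) (l' : ℕ → ℕ) (hsched : FeasibleSchedule N m P x Y' l') :
    (∀ h, 1 ≤ h → h + 1 ≤ Y' → l' (h + 1) - l' h ≤ gfun N m P x (l' h)) ∧
    N + 1 - l' Y' ≤ gfun N m P x (l' Y') := by
  obtain ⟨hY, hl1, hmono, hlN, hblocks, flast, hflast, hvlast⟩ := hsched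
  constructor
  · intro h h1 hY'
    obtain ⟨f, hfsol, hfval⟩ := hblocks h h1 hY'
    exact valid_le_gfun N m P x hm hfsol hfval
  · exact valid_le_gfun N m P x hm hflast hvlast
end

section
/- (Bellman recursion of the dynamic program) Fix Y ≥ 1 and assume every set Sol(k,q) needed below is nonempty. For 1 ≤ h ≤ Y and h ≤ k ≤ N − (Y − h), define cost(k,h) as the minimum of ∑_{r=h}^{Y} C(k_r, q_r)·q_r over all sequences k = k_h < k_{h+1} < ⋯ < k_Y ≤ N with k_{Y+1} := N+1, q_r := k_{r+1} − k_r, and Sol(k_r, q_r) nonempty for each r. Then cost satisfies the boundary condition cost(k,Y) = C(k, N − k + 1)·(N − k + 1) for Y ≤ k ≤ N, and the recursion cost(k,h) = min over q ≥ 1 with Sol(k,q) nonempty and k + q ≤ N − (Y − h − 1) of ( C(k,q)·q + cost(k+q, h+1) ) for 1 ≤ h ≤ Y − 1. -/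
open scoped ENNReal NNReal

/-- The solution `f` is valid on executions `k,…,k+q−1`: each assigned
provider is active at all these executions. -/
def ValidBlock (m : ℕ) (x : ℕ → ℕ → Bool) (f : ℕ → ℕ) (k q : ℕ) : Prop :=
  ∀ j, 1 ≤ j → j ≤ m → ∀ t, k ≤ t → t < k + q → x (f j) t = true

/-- `Sol(k,q)` : the set of service composition solutions valid on executions
`k,…,k+q−1`. -/
def SolSet (m : ℕ) (P : ℕ → Finset ℕ) (x : ℕ → ℕ → Bool) (k q : ℕ) :
    Set (ℕ → ℕ) :=
  {f | IsSolution m P f ∧ ValidBlock m x f k q}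

/-- Per-execution transmission cost of a solution `f`:
`c(f) = ∑_{j=1}^{m−1} w(f j, f (j+1))`, where `w` assigns a nonnegative real
transmission cost to each ordered pair of providers. -/
noncomputable def ccost (m : ℕ) (w : ℕ → ℕ → ℝ≥0) (f : ℕ → ℕ) : ℝ≥0 :=
  ∑ j ∈ Finset.Icc 1 (m - 1), w (f j) (f (j + 1))

/-- `C(k,q)` : the minimum per-execution transmission cost over solutions in
`Sol(k,q)` (valued in `ℝ≥0∞`, so it is `∞` when `Sol(k,q)` is empty). -/
noncomputable def Ccost (m : ℕ) (w : ℕ → ℕ → ℝ≥0) (P : ℕ → Finset ℕ)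
    (x : ℕ → ℕ → Bool) (k q : ℕ) : ℝ≥0∞ :=
  ⨅ f ∈ SolSet m P x k q, (ccost m w f : ℝ≥0∞)

/-- A sequence `k = k_h < k_{h+1} < ⋯ < k_Y ≤ N` (with `k_{Y+1} := N+1`) such
that `Sol(k_r, q_r)` is nonempty for each `r`, where `q_r = k_{r+1} − k_r`. -/
def AdmissibleSeq (N m Y : ℕ) (P : ℕ → Finset ℕ) (x : ℕ → ℕ → Bool)
    (h k : ℕ) (K : ℕ → ℕ) : Prop :=
  K h = k ∧ K (Y + 1) = N + 1 ∧
  (∀ r, h ≤ r → r ≤ Y → K r < K (r + 1)) ∧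
  (∀ r, h ≤ r → r ≤ Y → (SolSet m P x (K r) (K (r + 1) - K r)).Nonempty)

/-- `∑_{r=h}^{Y} C(k_r, q_r)·q_r`, the total transmission cost of the
sequence `K` from index `h` on. -/
noncomputable def seqCost (m Y : ℕ) (w : ℕ → ℕ → ℝ≥0) (P : ℕ → Finset ℕ)
    (x : ℕ → ℕ → Bool) (h : ℕ) (K : ℕ → ℕ) : ℝ≥0∞ :=
  ∑ r ∈ Finset.Icc h Y,
    Ccost m w P x (K r) (K (r + 1) - K r) * ((K (r + 1) - K r : ℕ) : ℝ≥0∞)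

/-- `cost(k,h)` : the minimum of `∑_{r=h}^{Y} C(k_r,q_r)·q_r` over all
admissible sequences `k = k_h < ⋯ < k_Y ≤ N`, `k_{Y+1} := N+1`. -/
noncomputable def dpCost (N m Y : ℕ) (w : ℕ → ℕ → ℝ≥0) (P : ℕ → Finset ℕ)
    (x : ℕ → ℕ → Bool) (k h : ℕ) : ℝ≥0∞ :=
  ⨅ K ∈ {K : ℕ → ℕ | AdmissibleSeq N m Y P x h k K}, seqCost m Y w P x h K


private lemma seqCost_split (m Y : ℕ) (w : ℕ → ℕ → ℝ≥0) (P : ℕ → Finset ℕ)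
    (x : ℕ → ℕ → Bool) (h : ℕ) (K : ℕ → ℕ) (hhY : h ≤ Y) :
    seqCost m Y w P x h K =
      Ccost m w P x (K h) (K (h+1) - K h) * ((K (h+1) - K h : ℕ) : ℝ≥0∞)
        + seqCost m Y w P x (h+1) K := by
  unfold seqCost
  rw [Finset.Icc_eq_cons_Ioc hhY, Finset.sum_cons, ← Finset.Icc_add_one_left_eq_Ioc]

private lemma chain_bound (Y h : ℕ) (K : ℕ → ℕ)
    (hmono : ∀ r, h ≤ r → r ≤ Y → K r < K (r + 1)) :
    ∀ d r, h ≤ r → r + d = Y + 1 → K r + d ≤ K (Y + 1) := by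
  intro d
  induction d with
  | zero =>
    intro r hr hrd
    have : r = Y + 1 := by omega
    simp [this]
  | succ d ih =>
    intro r hr hrd
    have h1 : K r < K (r + 1) := hmono r hr (by omega)
    have h2 := ih (r + 1) (by omega) (by omega)
    omega

/-- **Bellman recursion of the dynamic program.** Fix `Y ≥ 1`
and assume every needed `Sol(k,q)` is nonempty. Then `cost` satisfies the
boundary condition `cost(k,Y) = C(k, N−k+1)·(N−k+1)` for `Y ≤ k ≤ N`, and for
`1 ≤ h ≤ Y−1`, `h ≤ k ≤ N−(Y−h)` the recursion
`cost(k,h) = min_{q ≥ 1, Sol(k,q) ≠ ∅, k+q ≤ N−(Y−h−1)} (C(k,q)·q + cost(k+q,h+1))`. -/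
theorem statement6 (N m n Y : ℕ) (P : ℕ → Finset ℕ) (x : ℕ → ℕ → Bool)
    (w : ℕ → ℕ → ℝ≥0)
    (hm : 1 ≤ m) (hY : 1 ≤ Y) (hYN : Y ≤ N)
    (hP : ∀ j, 1 ≤ j → j ≤ m → (P j).Nonempty)
    (hPn : ∀ j, 1 ≤ j → j ≤ m → ∀ i ∈ P j, 1 ≤ i ∧ i ≤ n)
    (hsol : ∀ k q, 1 ≤ k → 1 ≤ q → k + q ≤ N + 1 → (SolSet m P x k q).Nonempty) :
    (∀ k, Y ≤ k → k ≤ N →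
      dpCost N m Y w P x k Y =
        Ccost m w P x k (N - k + 1) * ((N - k + 1 : ℕ) : ℝ≥0∞)) ∧
    (∀ h, 1 ≤ h → h ≤ Y - 1 → ∀ k, h ≤ k → k ≤ N - (Y - h) →
      dpCost N m Y w P x k h =
        ⨅ q ∈ {q : ℕ | 1 ≤ q ∧ (SolSet m P x k q).Nonempty ∧
                k + q ≤ N - (Y - h - 1)},
          (Ccost m w P x k q * (q : ℝ≥0∞) + dpCost N m Y w P x (k + q) (h + 1))) := by

  constructor
  · -- boundary condition h = Y
    intro k hYk hkN
    have hval : ∀ K, AdmissibleSeq N m Y P x Y k K →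
        seqCost m Y w P x Y K =
          Ccost m w P x k (N - k + 1) * ((N - k + 1 : ℕ) : ℝ≥0∞) := by
      intro K hK
      obtain ⟨hKY, hKY1, _, _⟩ := hK
      unfold seqCost
      rw [show Finset.Icc Y Y = {Y} by simp, Finset.sum_singleton, hKY, hKY1,
        show N + 1 - k = N - k + 1 by omega]
    refine le_antisymm ?_ ?_
    · set K₀ : ℕ → ℕ := fun r => if r ≤ Y then k else N + 1 with hK₀
      have hadm : AdmissibleSeq N m Y P x Y k K₀ := by
        refine ⟨by simp [hK₀], by simp [hK₀], ?_, ?_⟩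
        · intro r hr hr'
          have : r = Y := by omega
          simp [hK₀, this]; omega
        · intro r hr hr'
          have hrY : r = Y := by omega
          have : K₀ r = k ∧ K₀ (r + 1) = N + 1 := by
            constructor <;> simp [hK₀, hrY]
          rw [this.1, this.2]
          exact hsol k (N + 1 - k) (by omega) (by omega) (by omega)
      calc dpCost N m Y w P x k Y ≤ seqCost m Y w P x Y K₀ :=
            iInf₂_le K₀ hadm
        _ = _ := hval K₀ hadm
    · exact le_iInf₂ fun K hK => (hval K hK).ge
  · -- recursion
    intro h h1 hhY1 k hhk hkN
    have hhY : h ≤ Y := by omega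
    refine le_antisymm ?_ ?_
    · refine le_iInf₂ fun q hq => ?_
      obtain ⟨hq1, hqsol, hqN⟩ := hq
      conv_rhs => rw [dpCost, iInf_subtype', ENNReal.add_iInf]
      refine le_iInf fun K' => ?_
      obtain ⟨K', hK'⟩ := K'
      obtain ⟨hK'1, hK'2, hK'3, hK'4⟩ := hK'
      set K : ℕ → ℕ := fun r => if r = h then k else K' r with hKdef
      have hKh : K h = k := by simp [hKdef]
      have hKr : ∀ r, h + 1 ≤ r → K r = K' r := by
        intro r hr; simp [hKdef]; omega
      have hadm : AdmissibleSeq N m Y P x h k K := by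
        refine ⟨hKh, ?_, ?_, ?_⟩
        · rw [hKr (Y + 1) (by omega)]; exact hK'2
        · intro r hr hr'
          rcases eq_or_lt_of_le hr with hrh | hrh
          · rw [← hrh, hKh, hKr (h + 1) le_rfl, hK'1]; omega
          · rw [hKr r hrh, hKr (r + 1) (by omega)]
            exact hK'3 r hrh hr'
        · intro r hr hr'
          rcases eq_or_lt_of_le hr with hrh | hrh
          · rw [← hrh, hKh, hKr (h + 1) (by omega), hK'1,
              show k + q - k = q by omega]
            exact hqsol
          · rw [hKr r hrh, hKr (r + 1) (by omega)]
            exact hK'4 r hrh hr'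
      have hsplit := seqCost_split m Y w P x h K hhY
      have htail : seqCost m Y w P x (h + 1) K = seqCost m Y w P x (h + 1) K' := by
        unfold seqCost
        refine Finset.sum_congr rfl fun r hr => ?_
        simp only [Finset.mem_Icc] at hr
        rw [hKr r hr.1, hKr (r + 1) (by omega)]
      calc dpCost N m Y w P x k h ≤ seqCost m Y w P x h K := iInf₂_le K hadm
        _ = Ccost m w P x k q * (q : ℝ≥0∞) + seqCost m Y w P x (h + 1) K' := by
            rw [hsplit, htail, hKh, hKr (h + 1) le_rfl, hK'1,
              show k + q - k = q by omega]
        _ = _ := rfl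
    · refine le_iInf₂ fun K hK => ?_
      obtain ⟨hK1, hK2, hK3, hK4⟩ := hK
      set q : ℕ := K (h + 1) - k with hqdef
      have hkK : k < K (h + 1) := hK1 ▸ hK3 h le_rfl hhY
      have hKh1 : K (h + 1) = k + q := by omega
      have hbound : K (h + 1) + (Y - h) ≤ N + 1 := by
        have := chain_bound Y h K hK3 (Y - h) (h + 1) (by omega) (by omega)
        omega
      have hqmem : q ∈ {q : ℕ | 1 ≤ q ∧ (SolSet m P x k q).Nonempty ∧
          k + q ≤ N - (Y - h - 1)} := by
        refine ⟨by omega, ?_, by omega⟩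
        have := hK4 h le_rfl hhY
        rwa [hK1] at this
      have hadm' : AdmissibleSeq N m Y P x (h + 1) (k + q) K :=
        ⟨hKh1, hK2, fun r hr hr' => hK3 r (by omega) hr',
          fun r hr hr' => hK4 r (by omega) hr'⟩
      have hdp : dpCost N m Y w P x (k + q) (h + 1) ≤ seqCost m Y w P x (h + 1) K :=
        iInf₂_le K hadm'
      calc (⨅ q ∈ {q : ℕ | 1 ≤ q ∧ (SolSet m P x k q).Nonempty ∧
                k + q ≤ N - (Y - h - 1)},
              (Ccost m w P x k q * (q : ℝ≥0∞) + dpCost N m Y w P x (k + q) (h + 1)))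
          ≤ Ccost m w P x k q * (q : ℝ≥0∞) + dpCost N m Y w P x (k + q) (h + 1) :=
            iInf₂_le q hqmem
        _ ≤ Ccost m w P x k q * (q : ℝ≥0∞) + seqCost m Y w P x (h + 1) K :=
            add_le_add le_rfl hdp
        _ = seqCost m Y w P x h K := by
            rw [seqCost_split m Y w P x h K hhY, hK1, hKh1,
              show k + q - k = q by omega]
end

section
/- (Optimality of the dynamic programming algorithm) Fix Y ≥ 1 and assume there exists at least one feasible schedule of the N executions using exactly Y solutions. Then cost(1,1), the value computed by the dynamic program with boundary condition cost(k,Y) = C(k, N − k + 1)·(N − k + 1) and recursion cost(k,h) = min over q of ( C(k,q)·q + cost(k+q, h+1) ), equals the minimum, over all feasible schedules 1 = k_1 < k_2 < ⋯ < k_Y ≤ N with exactly Y solutions, of the total transmission cost ∑_{h=1}^{Y} C(k_h, q_h)·q_h, where q_h = k_{h+1} − k_h (with k_{Y+1} := N+1) is the number of executions served by the h-th solution. -/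
open scoped ENNReal NNReal

/-- A feasible schedule of the `N` executions with exactly `Y` solutions:
breakpoints `1 = k_1 < k_2 < ⋯ < k_Y ≤ N` (with `k_{Y+1} := N+1`) such that
`Sol(k_h, q_h)` is nonempty for each `h`, where `q_h = k_{h+1} − k_h`. -/
def FeasibleScheduleY (N m Y : ℕ) (P : ℕ → Finset ℕ) (x : ℕ → ℕ → Bool)
    (K : ℕ → ℕ) : Prop :=
  K 1 = 1 ∧ K (Y + 1) = N + 1 ∧
  (∀ h, 1 ≤ h → h ≤ Y → K h < K (h + 1)) ∧
  (∀ h, 1 ≤ h → h ≤ Y → (SolSet m P x (K h) (K (h + 1) - K h)).Nonempty)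

/-- The total transmission cost `∑_{h=1}^{Y} C(k_h, q_h)·q_h` of a schedule. -/
noncomputable def totalCost (m Y : ℕ) (w : ℕ → ℕ → ℝ≥0) (P : ℕ → Finset ℕ)
    (x : ℕ → ℕ → Bool) (K : ℕ → ℕ) : ℝ≥0∞ :=
  ∑ h ∈ Finset.Icc 1 Y,
    Ccost m w P x (K h) (K (h + 1) - K h) * ((K (h + 1) - K h : ℕ) : ℝ≥0∞)

/-- Partial schedules starting at position `h` with breakpoint `K h = k`. -/
def Sched (N m Y : ℕ) (P : ℕ → Finset ℕ) (x : ℕ → ℕ → Bool) (h k : ℕ)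
    (K : ℕ → ℕ) : Prop :=
  K h = k ∧ K (Y + 1) = N + 1 ∧
  (∀ t, h ≤ t → t ≤ Y → K t < K (t + 1)) ∧
  (∀ t, h ≤ t → t ≤ Y → (SolSet m P x (K t) (K (t + 1) - K t)).Nonempty)

/-- Partial total cost from position `h` onward. -/
noncomputable def pcost (m Y : ℕ) (w : ℕ → ℕ → ℝ≥0) (P : ℕ → Finset ℕ)
    (x : ℕ → ℕ → Bool) (h : ℕ) (K : ℕ → ℕ) : ℝ≥0∞ :=
  ∑ t ∈ Finset.Icc h Y,
    Ccost m w P x (K t) (K (t + 1) - K t) * ((K (t + 1) - K t : ℕ) : ℝ≥0∞)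

lemma sched_chain {N m Y : ℕ} {P : ℕ → Finset ℕ} {x : ℕ → ℕ → Bool} {h k : ℕ}
    {K : ℕ → ℕ} (hK : Sched N m Y P x h k K) :
    ∀ b a, h ≤ a → a ≤ b → b ≤ Y + 1 → K a + (b - a) ≤ K b := by
  intro b
  induction b with
  | zero =>
    intro a _ hab _
    have : a = 0 := Nat.le_zero.mp hab
    subst this; simp
  | succ c ihc =>
    intro a ha hab hb
    rcases Nat.lt_or_ge a (c + 1) with hlt | hge
    · have hac : a ≤ c := Nat.lt_succ_iff.mp hlt
      have h1 := ihc a ha hac (by omega)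
      have h2 : K c < K (c + 1) := hK.2.2.1 c (le_trans ha hac) (by omega)
      omega
    · have : a = c + 1 := le_antisymm hab hge
      subst this; simp

lemma icc_split {h Y : ℕ} (hhY : h ≤ Y) (g : ℕ → ℝ≥0∞) :
    ∑ t ∈ Finset.Icc h Y, g t = g h + ∑ t ∈ Finset.Icc (h + 1) Y, g t := by
  rw [show Finset.Icc h Y = insert h (Finset.Icc (h + 1) Y) by
      ext t; simp only [Finset.mem_Icc, Finset.mem_insert]; omega,
    Finset.sum_insert (by simp only [Finset.mem_Icc]; omega)]

lemma dpClaim (N m Y : ℕ) (P : ℕ → Finset ℕ) (x : ℕ → ℕ → Bool)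
    (w : ℕ → ℕ → ℝ≥0) (cost : ℕ → ℕ → ℝ≥0∞)
    (hbound : ∀ k, Y ≤ k → k ≤ N →
      cost k Y = Ccost m w P x k (N - k + 1) * ((N - k + 1 : ℕ) : ℝ≥0∞))
    (hrec : ∀ h, 1 ≤ h → h ≤ Y - 1 → ∀ k, h ≤ k → k ≤ N - (Y - h) →
      cost k h =
        ⨅ q ∈ {q : ℕ | 1 ≤ q ∧ (SolSet m P x k q).Nonempty ∧
                k + q ≤ N - (Y - h - 1)},
          (Ccost m w P x k q * (q : ℝ≥0∞) + cost (k + q) (h + 1))) :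
    ∀ d h, h + d = Y → 1 ≤ h → ∀ k, h ≤ k → k ≤ N - (Y - h) →
      cost k h = ⨅ K ∈ {K : ℕ → ℕ | Sched N m Y P x h k K},
        pcost m Y w P x h K := by
  intro d
  induction d with
  | zero =>
    intro h hhY h1 k hk1 hk2
    have hEq : h = Y := by omega
    subst hEq
    have hkN : k ≤ N := by omega
    rw [hbound k hk1 hkN]
    have hq : N - k + 1 = N + 1 - k := by omega
    rw [hq]
    by_cases hS : (SolSet m P x k (N + 1 - k)).Nonempty
    · apply le_antisymm
      · refine le_iInf fun K => le_iInf fun hK => ?_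
        obtain ⟨e1, e2, _, _⟩ := hK
        apply le_of_eq
        rw [pcost, Finset.Icc_self, Finset.sum_singleton, e1, e2]
      · set K₀ : ℕ → ℕ := fun t => if t ≤ h then k else N + 1 with hK₀
        have hmem : K₀ ∈ {K : ℕ → ℕ | Sched N m h P x h k K} := by
          refine ⟨by simp [hK₀], by simp [hK₀], ?_, ?_⟩
          · intro t ht1 ht2
            have : t = h := le_antisymm ht2 ht1
            subst this
            simp only [hK₀, le_refl, if_pos, if_neg (by omega : ¬ t + 1 ≤ t)]
            omega
          · intro t ht1 ht2
            have : t = h := le_antisymm ht2 ht1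
            subst this
            simpa only [hK₀, le_refl, if_pos, if_neg (by omega : ¬ t + 1 ≤ t)] using hS
        refine le_trans (iInf₂_le K₀ hmem) (le_of_eq ?_)
        rw [pcost, Finset.Icc_self, Finset.sum_singleton]
        simp only [hK₀, le_refl, if_pos, if_neg (by omega : ¬ h + 1 ≤ h)]
    · have hEmp : SolSet m P x k (N + 1 - k) = ∅ :=
        Set.not_nonempty_iff_eq_empty.mp hS
      have hC : Ccost m w P x k (N + 1 - k) = ⊤ := by
        rw [Ccost, hEmp]; simp
      rw [hC, ENNReal.top_mul (by
        simp only [ne_eq, Nat.cast_eq_zero]; omega)]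
      refine le_antisymm (le_iInf fun K => le_iInf fun hK => ?_) le_top
      exfalso
      obtain ⟨e1, e2, _, hsol⟩ := hK
      have := hsol h le_rfl le_rfl
      rw [e1, e2] at this
      exact hS this
  | succ d ih =>
    intro h hhY h1 k hk1 hk2
    have hYh : Y - h = d + 1 := by omega
    rw [hrec h h1 (by omega) k hk1 hk2]
    apply le_antisymm
    · refine le_iInf fun K => le_iInf fun hK => ?_
      obtain ⟨e1, e2, hinc, hsol⟩ := hK
      have hlt : k < K (h + 1) := e1 ▸ hinc h le_rfl (by omega)
      set q := K (h + 1) - k with hqdef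
      have hq1 : 1 ≤ q := by omega
      have hkq : k + q = K (h + 1) := by omega
      have hchain := sched_chain ⟨e1, e2, hinc, hsol⟩ (Y + 1) (h + 1)
        (by omega) (by omega) le_rfl
      rw [e2] at hchain
      have hle : k + q ≤ N - (Y - h - 1) := by omega
      have hmem : q ∈ {q : ℕ | 1 ≤ q ∧ (SolSet m P x k q).Nonempty ∧
          k + q ≤ N - (Y - h - 1)} := by
        refine ⟨hq1, ?_, hle⟩
        have := hsol h le_rfl (by omega)
        rwa [e1] at this
      refine le_trans (iInf₂_le q hmem) ?_
      rw [ih (h + 1) (by omega) (by omega) (k + q) (by omega) (by omega)]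
      have hK' : Sched N m Y P x (h + 1) (k + q) K :=
        ⟨hkq.symm, e2, fun t ht1 ht2 => hinc t (by omega) ht2,
         fun t ht1 ht2 => hsol t (by omega) ht2⟩
      have h2 : (⨅ K' ∈ {K' : ℕ → ℕ | Sched N m Y P x (h + 1) (k + q) K'},
          pcost m Y w P x (h + 1) K') ≤ pcost m Y w P x (h + 1) K :=
        iInf₂_le K hK'
      have hsplit : pcost m Y w P x h K =
          Ccost m w P x k q * (q : ℝ≥0∞) + pcost m Y w P x (h + 1) K := by
        rw [pcost, icc_split (by omega : h ≤ Y), e1, ← hqdef]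
        rfl
      rw [hsplit]
      exact add_le_add_right h2 _
    · refine le_iInf fun q => le_iInf fun hq => ?_
      obtain ⟨hq1, hqsol, hqle⟩ := hq
      rw [ih (h + 1) (by omega) (by omega) (k + q) (by omega) (by omega)]
      rw [ENNReal.add_iInf]
      refine le_iInf fun K' => ?_
      rw [ENNReal.add_iInf]
      refine le_iInf fun hK' => ?_
      obtain ⟨e1', e2', hinc', hsol'⟩ := hK'
      set K2 : ℕ → ℕ := fun t => if t = h then k else K' t with hK2
      have hK2h : K2 h = k := by simp [hK2]
      have hK2r : ∀ t, h + 1 ≤ t → K2 t = K' t := by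
        intro t ht; simp only [hK2, if_neg (by omega : ¬ t = h)]
      have hmem : Sched N m Y P x h k K2 := by
        refine ⟨hK2h, by rw [hK2r (Y + 1) (by omega), e2'], ?_, ?_⟩
        · intro t ht1 ht2
          rcases eq_or_lt_of_le ht1 with hth | hth
          · subst hth
            rw [hK2h, hK2r _ le_rfl, e1']
            omega
          · rw [hK2r t hth, hK2r (t + 1) (by omega)]
            exact hinc' t hth ht2
        · intro t ht1 ht2
          rcases eq_or_lt_of_le ht1 with hth | hth
          · subst hth
            rw [hK2h, hK2r _ le_rfl, e1', Nat.add_sub_cancel_left]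
            exact hqsol
          · rw [hK2r t hth, hK2r (t + 1) (by omega)]
            exact hsol' t hth ht2
      refine le_trans (iInf₂_le K2 hmem) (le_of_eq ?_)
      rw [pcost, icc_split (by omega : h ≤ Y), hK2h,
        hK2r (h + 1) le_rfl, e1', Nat.add_sub_cancel_left]
      congr 1
      refine Finset.sum_congr rfl fun t ht => ?_
      rw [Finset.mem_Icc] at ht
      rw [hK2r t ht.1, hK2r (t + 1) (by omega)]

/-- **Optimality of the dynamic programming algorithm.** Fix
`Y ≥ 1` and assume at least one feasible schedule of the `N` executions with
exactly `Y` solutions exists. Then `cost(1,1)`, the value computed by the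
dynamic program with boundary condition
`cost(k,Y) = C(k, N−k+1)·(N−k+1)` and recursion
`cost(k,h) = min_q (C(k,q)·q + cost(k+q, h+1))`, equals the minimum over all
feasible schedules `1 = k_1 < ⋯ < k_Y ≤ N` with exactly `Y` solutions of the
total transmission cost `∑_{h=1}^{Y} C(k_h, q_h)·q_h`. -/
theorem statement7 (N m n Y : ℕ) (P : ℕ → Finset ℕ) (x : ℕ → ℕ → Bool)
    (w : ℕ → ℕ → ℝ≥0)
    (hm : 1 ≤ m) (hY : 1 ≤ Y) (hN : 1 ≤ N)
    (hP : ∀ j, 1 ≤ j → j ≤ m → (P j).Nonempty)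
    (hPn : ∀ j, 1 ≤ j → j ≤ m → ∀ i ∈ P j, 1 ≤ i ∧ i ≤ n)
    (hex : ∃ K : ℕ → ℕ, FeasibleScheduleY N m Y P x K)
    (cost : ℕ → ℕ → ℝ≥0∞)
    (hbound : ∀ k, Y ≤ k → k ≤ N →
      cost k Y = Ccost m w P x k (N - k + 1) * ((N - k + 1 : ℕ) : ℝ≥0∞))
    (hrec : ∀ h, 1 ≤ h → h ≤ Y - 1 → ∀ k, h ≤ k → k ≤ N - (Y - h) →
      cost k h =
        ⨅ q ∈ {q : ℕ | 1 ≤ q ∧ (SolSet m P x k q).Nonempty ∧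
                k + q ≤ N - (Y - h - 1)},
          (Ccost m w P x k q * (q : ℝ≥0∞) + cost (k + q) (h + 1))) :
    cost 1 1 =
      ⨅ K ∈ {K : ℕ → ℕ | FeasibleScheduleY N m Y P x K},
        totalCost m Y w P x K := by
  obtain ⟨K0, hK0⟩ := hex
  have hK0' : Sched N m Y P x 1 1 K0 := hK0
  have hYN : Y ≤ N := by
    have hc := sched_chain hK0' (Y + 1) 1 le_rfl (by omega) le_rfl
    have h1 := hK0'.1
    have h2 := hK0'.2.1
    omega
  have hmain := dpClaim N m Y P x w cost hbound hrec (Y - 1) 1 (by omega)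
    le_rfl 1 le_rfl (by omega)
  rw [hmain]
  rfl
end
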